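/- Let G be a group such that Hom(G, ℤ/2) has exactly 16 elements (i.e., is a 4-dimensional vector space over the field with two elements), and let ρ: G → Sp(1) be a projective representation whose image is exactly Q8 = {±1, ±i, ±j, ±k}. Then the orbit of the conjugacy class of ρ under the twisting action χ·[ρ] = [ρ^χ] of Hom(G, {±1}) has exactly 4 elements. -/

import Mathlib

noncomputable section

open Quaternion

/-- A projective representation of `G` in the group `Sp(1)` of unit quaternions:
a function with values of norm one such that `ρ(gh)ρ(h)⁻¹ρ(g)⁻¹ ∈ {±1}`. -/
def IsProjRep {G : Type*} [Group G] (ρ : G → ℍ[ℝ]) : Prop :=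
  (∀ g : G, ‖ρ g‖ = 1) ∧
    ∀ g h : G, ρ (g * h) * (ρ h)⁻¹ * (ρ g)⁻¹ = 1 ∨ ρ (g * h) * (ρ h)⁻¹ * (ρ g)⁻¹ = -1

/-- A homomorphism from `G` into the subgroup `{±1}` of unit quaternions. -/
def IsSignHom {G : Type*} [Group G] (χ : G → ℍ[ℝ]) : Prop :=
  (∀ g : G, χ g = 1 ∨ χ g = -1) ∧ ∀ g h : G, χ (g * h) = χ g * χ h

/-- A projective representation `ρ` is irreducible if the centralizer of its image in `Sp(1)`
is `{±1}`. -/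
def IsIrred {G : Type*} [Group G] (ρ : G → ℍ[ℝ]) : Prop :=
  ∀ q : ℍ[ℝ], ‖q‖ = 1 → (∀ g : G, q * ρ g = ρ g * q) → q = 1 ∨ q = -1

def qi : ℍ[ℝ] := ⟨0, 1, 0, 0⟩
def qj : ℍ[ℝ] := ⟨0, 0, 1, 0⟩
def qk : ℍ[ℝ] := ⟨0, 0, 0, 1⟩

/-- The quaternion group `Q8 = {±1, ±i, ±j, ±k}` inside the unit quaternions. -/
def Q8 : Set ℍ[ℝ] := {1, -1, qi, -qi, qj, -qj, qk, -qk}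

/-- The conjugacy class of a map `ρ : G → Sp(1)`: its orbit under conjugation by
unit quaternions. -/
def conjClass {G : Type*} [Group G] (ρ : G → ℍ[ℝ]) : Set (G → ℍ[ℝ]) :=
  {σ : G → ℍ[ℝ] | ∃ u : ℍ[ℝ], ‖u‖ = 1 ∧ ∀ g : G, σ g = u * ρ g * u⁻¹}

/-!
The set of sign characters `χ` for which `[ρ^χ] = [ρ]` is a subgroup `S`, and `[ρ^χ] = [ρ^χ']`
exactly when `χχ' ∈ S`; so every fibre of `χ ↦ [ρ^χ]` has `|S|` elements and the orbit has
`16 / |S|` elements. If `δ ∈ S`, say `δρ = uρu⁻¹`, then conjugation by `u` multiplies `i` and `j`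
by the signs `δ(gᵢ)`, `δ(gⱼ)` (where `ρ(gᵢ) = i`, `ρ(gⱼ) = j`), hence is determined on all of
`Q8 = ⟨i, j⟩`, hence determines `δ`. Conversely conjugation by `1, i, j, k` preserves `Q8` up to
sign and realises all four sign pairs. So `|S| = 4` and the orbit has four elements.
-/

@[simp] lemma qi_re : qi.re = 0 := rfl
@[simp] lemma qi_imI : qi.imI = 1 := rfl
@[simp] lemma qi_imJ : qi.imJ = 0 := rfl
@[simp] lemma qi_imK : qi.imK = 0 := rfl
@[simp] lemma qj_re : qj.re = 0 := rfl
@[simp] lemma qj_imI : qj.imI = 0 := rfl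
@[simp] lemma qj_imJ : qj.imJ = 1 := rfl
@[simp] lemma qj_imK : qj.imK = 0 := rfl
@[simp] lemma qk_re : qk.re = 0 := rfl
@[simp] lemma qk_imI : qk.imI = 0 := rfl
@[simp] lemma qk_imJ : qk.imJ = 0 := rfl
@[simp] lemma qk_imK : qk.imK = 1 := rfl

@[simp] lemma qi_mul_qi : qi * qi = -1 := by ext <;> simp
@[simp] lemma qj_mul_qj : qj * qj = -1 := by ext <;> simp
@[simp] lemma qk_mul_qk : qk * qk = -1 := by ext <;> simp
@[simp] lemma qi_mul_qj : qi * qj = qk := by ext <;> simp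
@[simp] lemma qj_mul_qi : qj * qi = -qk := by ext <;> simp
@[simp] lemma qj_mul_qk : qj * qk = qi := by ext <;> simp
@[simp] lemma qk_mul_qj : qk * qj = -qi := by ext <;> simp
@[simp] lemma qk_mul_qi : qk * qi = qj := by ext <;> simp
@[simp] lemma qi_mul_qk : qi * qk = -qj := by ext <;> simp

lemma commute_of_eq_one_or_neg_one {s : ℍ[ℝ]} (hs : s = 1 ∨ s = -1) (x : ℍ[ℝ]) : Commute s x := by
  rcases hs with rfl | rfl
  exacts [Commute.one_left x, (Commute.one_left x).neg_left]

lemma mul_self_of_eq_one_or_neg_one {s : ℍ[ℝ]} (hs : s = 1 ∨ s = -1) : s * s = 1 := by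
  rcases hs with rfl | rfl <;> simp

lemma ne_zero_of_eq_one_or_neg_one {s : ℍ[ℝ]} (hs : s = 1 ∨ s = -1) : s ≠ 0 := by
  rcases hs with rfl | rfl <;> simp

lemma conj_mul_conj {u : ℍ[ℝ]} (hu : u ≠ 0) (x y : ℍ[ℝ]) :
    u * x * u⁻¹ * (u * y * u⁻¹) = u * (x * y) * u⁻¹ := by
  simp [mul_assoc, inv_mul_cancel_left₀ hu]

lemma norm_eq_one_of_mul_self_eq_neg_one {x : ℍ[ℝ]} (h : x * x = -1) : ‖x‖ = 1 := by
  have hsq : ‖x‖ * ‖x‖ = 1 := by rw [← norm_mul, h, norm_neg, norm_one]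
  nlinarith [norm_nonneg x]

lemma norm_eq_one_of_mem_Q8 {x : ℍ[ℝ]} (hx : x ∈ Q8) : ‖x‖ = 1 := by
  rcases hx with rfl | rfl | rfl | rfl | rfl | rfl | rfl | rfl <;>
    simp only [norm_neg, norm_one,
      norm_eq_one_of_mul_self_eq_neg_one qi_mul_qi, norm_eq_one_of_mul_self_eq_neg_one qj_mul_qj,
      norm_eq_one_of_mul_self_eq_neg_one qk_mul_qk]

lemma ne_zero_of_mem_Q8 {x : ℍ[ℝ]} (hx : x ∈ Q8) : x ≠ 0 :=
  norm_ne_zero_iff.mp (norm_eq_one_of_mem_Q8 hx ▸ one_ne_zero)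

lemma mul_comm_or_anticomm_of_mem_Q8 {q x : ℍ[ℝ]} (hq : q ∈ Q8) (hx : x ∈ Q8) :
    q * x = x * q ∨ q * x = -(x * q) := by
  rcases hq with rfl | rfl | rfl | rfl | rfl | rfl | rfl | rfl <;>
  rcases hx with rfl | rfl | rfl | rfl | rfl | rfl | rfl | rfl <;>
  simp

lemma conj_eqOn_Q8 {u v : ℍ[ℝ]} (hu : u ≠ 0) (hv : v ≠ 0)
    (hi : u * qi * u⁻¹ = v * qi * v⁻¹) (hj : u * qj * u⁻¹ = v * qj * v⁻¹) :
    Set.EqOn (fun x => u * x * u⁻¹) (fun x => v * x * v⁻¹) Q8 := by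
  have hk : u * qk * u⁻¹ = v * qk * v⁻¹ := by
    rw [← qi_mul_qj, ← conj_mul_conj hu, ← conj_mul_conj hv, hi, hj]
  rintro x (rfl | rfl | rfl | rfl | rfl | rfl | rfl | rfl) <;>
    simp [mul_inv_cancel₀ hu, mul_inv_cancel₀ hv, hi, hj, hk]

open Classical in
def commSign (q x : ℍ[ℝ]) : ℍ[ℝ] := if q * x = x * q then 1 else -1

lemma commSign_eq_one_or_neg_one (q x : ℍ[ℝ]) : commSign q x = 1 ∨ commSign q x = -1 := by
  unfold commSign; split_ifs <;> simp

lemma commSign_mul_eq_conj {q x : ℍ[ℝ]} (hq : q ≠ 0) (h : q * x = x * q ∨ q * x = -(x * q)) :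
    commSign q x * x = q * x * q⁻¹ := by
  rw [eq_mul_inv_iff_mul_eq₀ hq]
  unfold commSign
  split_ifs with hc
  · rw [one_mul, hc]
  · rw [h.resolve_left hc, neg_one_mul, neg_mul]

lemma exists_mem_Q8_commSign_eq {a b : ℍ[ℝ]} (ha : a = 1 ∨ a = -1) (hb : b = 1 ∨ b = -1) :
    ∃ q ∈ Q8, commSign q qi = a ∧ commSign q qj = b := by
  rcases ha with rfl | rfl <;> rcases hb with rfl | rfl
  exacts [⟨1, by simp [Q8], by simp [commSign], by simp [commSign]⟩,
    ⟨qi, by simp [Q8], by simp [commSign], by norm_num [commSign, Quaternion.ext_iff]⟩,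
    ⟨qj, by simp [Q8], by norm_num [commSign, Quaternion.ext_iff], by simp [commSign]⟩,
    ⟨qk, by simp [Q8], by norm_num [commSign, Quaternion.ext_iff],
      by norm_num [commSign, Quaternion.ext_iff]⟩]

lemma ncard_image_mul_of_ncard_fibers {α β : Type*} {s : Set α} (hs : s.Finite) (f : α → β)
    {n : ℕ} (hn : ∀ a ∈ s, {b ∈ s | f b = f a}.ncard = n) : (f '' s).ncard * n = s.ncard := by
  classical
  obtain ⟨t, rfl⟩ := hs.exists_finset_coe
  rw [← Finset.coe_image, Set.ncard_coe_finset, Set.ncard_coe_finset,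
    Finset.card_eq_sum_card_image f t, Finset.sum_const_nat]
  intro b hb
  obtain ⟨a, ha, rfl⟩ := Finset.mem_image.mp hb
  rw [← hn a ha, ← Set.ncard_coe_finset, Finset.coe_filter]
  rfl

section Twisting

variable {G : Type*} [Group G]

lemma IsProjRep.ne_zero {ρ : G → ℍ[ℝ]} (hρ : IsProjRep ρ) (g : G) : ρ g ≠ 0 :=
  norm_ne_zero_iff.mp (hρ.1 g ▸ one_ne_zero)

lemma IsProjRep.exists_map_mul_eq {ρ : G → ℍ[ℝ]} (hρ : IsProjRep ρ) (g h : G) :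
    ∃ s : ℍ[ℝ], (s = 1 ∨ s = -1) ∧ ρ (g * h) = s * (ρ g * ρ h) :=
  ⟨_, hρ.2 g h, by simp [mul_assoc, hρ.ne_zero]⟩

lemma IsSignHom.mul_self {χ : G → ℍ[ℝ]} (hχ : IsSignHom χ) : χ * χ = 1 :=
  funext fun g => mul_self_of_eq_one_or_neg_one (hχ.1 g)

lemma IsSignHom.mul {χ χ' : G → ℍ[ℝ]} (hχ : IsSignHom χ) (hχ' : IsSignHom χ') :
    IsSignHom (χ * χ') := by
  refine ⟨fun g => ?_, fun g h => ?_⟩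
  · rcases hχ.1 g with h1 | h1 <;> rcases hχ'.1 g with h2 | h2 <;> simp [h1, h2]
  · simp only [Pi.mul_apply, hχ.2, hχ'.2]
    exact (commute_of_eq_one_or_neg_one (hχ.1 h) (χ' g)).mul_mul_mul_comm _ _

lemma isSignHom_of_mul_eq_conj {ρ δ : G → ℍ[ℝ]} (hρ : IsProjRep ρ)
    (hδ : ∀ g, δ g = 1 ∨ δ g = -1) {u : ℍ[ℝ]} (hu : u ≠ 0)
    (hconj : ∀ g, δ g * ρ g = u * ρ g * u⁻¹) : IsSignHom δ := by
  refine ⟨hδ, fun g h => mul_right_cancel₀ (hρ.ne_zero (g * h)) ?_⟩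
  obtain ⟨s, hs, hgh⟩ := hρ.exists_map_mul_eq g h
  have hsu := commute_of_eq_one_or_neg_one hs u
  have hρδ := (commute_of_eq_one_or_neg_one (hδ h) (ρ g)).symm
  calc δ (g * h) * ρ (g * h) = u * ρ (g * h) * u⁻¹ := hconj _
    _ = s * ((u * ρ g * u⁻¹) * (u * ρ h * u⁻¹)) := by
      rw [conj_mul_conj hu, hgh, ← mul_assoc u, ← hsu.eq, mul_assoc s, mul_assoc s]
    _ = s * ((δ g * ρ g) * (δ h * ρ h)) := by rw [hconj, hconj]
    _ = δ g * δ h * ρ (g * h) := by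
      rw [hgh, hρδ.mul_mul_mul_comm, (commute_of_eq_one_or_neg_one hs _).left_comm]

lemma self_mem_conjClass (σ : G → ℍ[ℝ]) : σ ∈ conjClass σ :=
  ⟨1, norm_one, fun g => by simp⟩

lemma conjClass_subset_of_mem {σ τ : G → ℍ[ℝ]} (h : τ ∈ conjClass σ) :
    conjClass τ ⊆ conjClass σ := by
  obtain ⟨u, hu, hτ⟩ := h
  rintro μ ⟨v, hv, hμ⟩
  refine ⟨v * u, by rw [norm_mul, hu, hv, one_mul], fun g => ?_⟩
  rw [hμ, hτ, mul_inv_rev]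
  simp only [mul_assoc]

lemma mem_conjClass_comm {σ τ : G → ℍ[ℝ]} (h : τ ∈ conjClass σ) : σ ∈ conjClass τ := by
  obtain ⟨u, hu, hτ⟩ := h
  have hu0 : u ≠ 0 := norm_ne_zero_iff.mp (hu ▸ one_ne_zero)
  refine ⟨u⁻¹, by rw [norm_inv, hu, inv_one], fun g => ?_⟩
  rw [hτ, inv_inv]
  simp [mul_assoc, hu0]

lemma conjClass_eq_conjClass_iff {σ τ : G → ℍ[ℝ]} : conjClass σ = conjClass τ ↔ τ ∈ conjClass σ :=
  ⟨fun h => h ▸ self_mem_conjClass τ, fun h =>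
    (conjClass_subset_of_mem (mem_conjClass_comm h)).antisymm (conjClass_subset_of_mem h)⟩

lemma mul_mem_conjClass_mul_iff {s σ τ : G → ℍ[ℝ]} (hs : ∀ g, s g = 1 ∨ s g = -1) :
    s * τ ∈ conjClass (s * σ) ↔ τ ∈ conjClass σ := by
  have hconj : ∀ u g, u * (s g * σ g) * u⁻¹ = s g * (u * σ g * u⁻¹) := fun u g => by
    rw [← mul_assoc u, ← (commute_of_eq_one_or_neg_one (hs g) u).eq]; simp only [mul_assoc]
  simp only [conjClass, Set.mem_ofPred_eq, Pi.mul_apply, hconj,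
    mul_right_inj' (ne_zero_of_eq_one_or_neg_one (hs _))]

lemma IsSignHom.mul_left_injective {χ : G → ℍ[ℝ]} (hχ : IsSignHom χ) :
    Function.Injective (χ * ·) := fun a b h => by
  simpa [← mul_assoc, hχ.mul_self] using congrArg (χ * ·) h

def twistStabilizer (ρ : G → ℍ[ℝ]) : Set (G → ℍ[ℝ]) :=
  {δ | IsSignHom δ ∧ δ * ρ ∈ conjClass ρ}

lemma setOf_conjClass_eq_eq_image {ρ χ₀ : G → ℍ[ℝ]} (hχ₀ : IsSignHom χ₀) :
    {χ | IsSignHom χ ∧ conjClass (χ * ρ) = conjClass (χ₀ * ρ)} =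
      (χ₀ * ·) '' twistStabilizer ρ := by
  ext χ
  constructor
  · rintro ⟨hχ, hC⟩
    refine ⟨χ₀ * χ, ⟨hχ₀.mul hχ, ?_⟩, ?_⟩
    · rwa [eq_comm, conjClass_eq_conjClass_iff, ← mul_mem_conjClass_mul_iff hχ₀.1, ← mul_assoc,
        hχ₀.mul_self, one_mul, ← mul_assoc] at hC
    · show χ₀ * (χ₀ * χ) = χ
      rw [← mul_assoc, hχ₀.mul_self, one_mul]
  · rintro ⟨δ, ⟨hδ, hδρ⟩, rfl⟩
    refine ⟨hχ₀.mul hδ, ?_⟩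
    rwa [eq_comm, conjClass_eq_conjClass_iff, mul_assoc, mul_mem_conjClass_mul_iff hχ₀.1]


lemma eq_of_mem_twistStabilizer {ρ : G → ℍ[ℝ]} (hQ8 : ∀ g, ρ g ∈ Q8) {gi gj : G} (hgi : ρ gi = qi)
    (hgj : ρ gj = qj) {δ δ' : G → ℍ[ℝ]} (hδ : δ ∈ twistStabilizer ρ)
    (hδ' : δ' ∈ twistStabilizer ρ) (hi : δ gi = δ' gi) (hj : δ gj = δ' gj) : δ = δ' := by
  obtain ⟨-, u, hu, hδu⟩ := hδ
  obtain ⟨-, v, hv, hδv⟩ := hδ'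
  simp only [Pi.mul_apply] at hδu hδv
  have hconj := conj_eqOn_Q8 (norm_ne_zero_iff.mp (hu ▸ one_ne_zero))
    (norm_ne_zero_iff.mp (hv ▸ one_ne_zero))
    (by rw [← hgi, ← hδu, ← hδv, hi]) (by rw [← hgj, ← hδu, ← hδv, hj])
  funext g
  exact mul_right_cancel₀ (ne_zero_of_mem_Q8 (hQ8 g)) (by rw [hδu, hδv]; exact hconj (hQ8 g))

lemma commSign_comp_mem_twistStabilizer {ρ : G → ℍ[ℝ]} (hρ : IsProjRep ρ) (hQ8 : ∀ g, ρ g ∈ Q8)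
    {q : ℍ[ℝ]} (hq : q ∈ Q8) : (fun g => commSign q (ρ g)) ∈ twistStabilizer ρ := by
  have hconj : ∀ g, commSign q (ρ g) * ρ g = q * ρ g * q⁻¹ := fun g =>
    commSign_mul_eq_conj (ne_zero_of_mem_Q8 hq) (mul_comm_or_anticomm_of_mem_Q8 hq (hQ8 g))
  exact ⟨isSignHom_of_mul_eq_conj hρ (fun g => commSign_eq_one_or_neg_one _ _)
    (ne_zero_of_mem_Q8 hq) hconj, q, norm_eq_one_of_mem_Q8 hq, hconj⟩

lemma ncard_twistStabilizer {ρ : G → ℍ[ℝ]} (hρ : IsProjRep ρ) (hrange : Set.range ρ = Q8) :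
    (twistStabilizer ρ).ncard = 4 := by
  have hQ8 : ∀ g, ρ g ∈ Q8 := fun g => hrange ▸ Set.mem_range_self g
  obtain ⟨gi, hgi⟩ : qi ∈ Set.range ρ := by rw [hrange]; simp [Q8]
  obtain ⟨gj, hgj⟩ : qj ∈ Set.range ρ := by rw [hrange]; simp [Q8]
  have himage : (fun δ => (δ gi, δ gj)) '' twistStabilizer ρ = {1, -1} ×ˢ {1, -1} := by
    refine Set.Subset.antisymm ?_ ?_
    · rintro _ ⟨δ, ⟨hδ, -⟩, rfl⟩
      exact ⟨hδ.1 gi, hδ.1 gj⟩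
    · rintro ⟨a, b⟩ ⟨ha, hb⟩
      obtain ⟨q, hq, hqi, hqj⟩ := exists_mem_Q8_commSign_eq ha hb
      exact ⟨_, commSign_comp_mem_twistStabilizer hρ hQ8 hq, by simp [hgi, hgj, hqi, hqj]⟩
  have hinj : Set.InjOn (fun δ => (δ gi, δ gj)) (twistStabilizer ρ) := fun δ hδ δ' hδ' h =>
    eq_of_mem_twistStabilizer hQ8 hgi hgj hδ hδ' (Prod.ext_iff.mp h).1 (Prod.ext_iff.mp h).2
  rw [← hinj.ncard_image, himage, Set.ncard_prod, Set.ncard_pair (by norm_num [Quaternion.ext_iff])]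

end Twisting

/-- If `Hom(G, ℤ/2)` has exactly sixteen elements and `ρ` is a projective representation
with image exactly `Q8`, then the orbit of the conjugacy class `[ρ]` under the twisting
action of `Hom(G, {±1})` has exactly four elements. -/
theorem orbit_of_Q8_rep_has_four_elements {G : Type*} [Group G]
    (hhom : {χ : G → ℍ[ℝ] | IsSignHom χ}.ncard = 16)
    (ρ : G → ℍ[ℝ]) (hρ : IsProjRep ρ) (hrange : Set.range ρ = Q8) :
    {C : Set (G → ℍ[ℝ]) | ∃ χ : G → ℍ[ℝ], IsSignHom χ ∧
      C = conjClass (fun g => χ g * ρ g)}.ncard = 4 := by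
  have horbit : {C : Set (G → ℍ[ℝ]) | ∃ χ : G → ℍ[ℝ], IsSignHom χ ∧
      C = conjClass (fun g => χ g * ρ g)} =
        (fun χ => conjClass (χ * ρ)) '' {χ | IsSignHom χ} := by
    ext C
    exact exists_congr fun χ => and_congr_right fun _ => eq_comm
  have hfibers : ∀ χ₀ ∈ {χ : G → ℍ[ℝ] | IsSignHom χ},
      {χ ∈ {χ | IsSignHom χ} | conjClass (χ * ρ) = conjClass (χ₀ * ρ)}.ncard = 4 :=
    fun χ₀ hχ₀ => by
      simp only [Set.mem_ofPred_eq]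
      rw [setOf_conjClass_eq_eq_image hχ₀, Set.ncard_image_of_injective _ hχ₀.mul_left_injective,
        ncard_twistStabilizer hρ hrange]
  have hcount := ncard_image_mul_of_ncard_fibers
    (Set.finite_of_ncard_ne_zero (by rw [hhom]; norm_num)) _ hfibers
  rw [horbit]
  omega
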